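/- arXiv:1907.02792 — 3 statements merged into one kernel-verified Lean document; each statement's English description precedes it below -/
import Mathlib

section
/- Let n ≥ 1, let A ⊆ ℝⁿ be a closed set and let F : ℝⁿ → ℝⁿ be a diffeomorphism of class C² of ℝⁿ onto ℝⁿ. Then for every integer 0 ≤ m ≤ n−1 the image of the m-th stratum of A under F equals the m-th stratum of F(A): F(A^(m)) = (F(A))^(m). -/
/-!
A unit vector `u` lies in `N(A, a)` exactly when it is a proximal normal: `⟪x - a, u⟫ ≤ K ‖x - a‖²`
for `x ∈ A` near `a`. With `b = F a` and `D = DG(b)`, the second-order Taylor bound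
`‖G x - G b - D (x - b)‖ ≤ C ‖x - b‖²` shows that `D* u` is a proximal normal of `F(A)` at `b`.
Hence `N(F(A), F a)` is the image of `N(A, a)` under `u ↦ D* u / ‖D* u‖`, a map of the unit sphere
which is Lipschitz with a Lipschitz inverse (the same construction for `DF(a)`), and such maps
preserve both `0 < H^d` and `H^d < ∞`.
-/

open MeasureTheory Metric

/-- The generalized unit normal bundle `N(A)` of a closed set `A ⊆ ℝⁿ`:
pairs `(a, u)` with `a ∈ A`, `|u| = 1` and `δ_A(a + s u) = s` for some `s > 0`. -/
def normalBundle {n : ℕ} (A : Set (EuclideanSpace ℝ (Fin n))) :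
    Set (EuclideanSpace ℝ (Fin n) × EuclideanSpace ℝ (Fin n)) :=
  {p | p.1 ∈ A ∧ ‖p.2‖ = 1 ∧ ∃ s : ℝ, 0 < s ∧ Metric.infDist (p.1 + s • p.2) A = s}

/-- The `m`-th stratum of a closed set `A ⊆ ℝⁿ`:
`A^(m) = {a ∈ A : 0 < H^{n-m-1}(N(A, a)) < ∞}`. -/
def stratum {n : ℕ} (A : Set (EuclideanSpace ℝ (Fin n))) (m : ℕ) :
    Set (EuclideanSpace ℝ (Fin n)) :=
  {a | a ∈ A ∧ 0 < μH[((n - m - 1 : ℕ) : ℝ)] {u | (a, u) ∈ normalBundle A}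
      ∧ μH[((n - m - 1 : ℕ) : ℝ)] {u | (a, u) ∈ normalBundle A} ≠ ⊤}

/-- The map `ν_F (a, u) = (F a, (DF(a)⁻¹)* u / |(DF(a)⁻¹)* u|)` associated to a diffeomorphism
`F` with inverse `G` (so that `DF(a)⁻¹ = DG(F a)`). -/
noncomputable def nuMap {n : ℕ} (F G : EuclideanSpace ℝ (Fin n) → EuclideanSpace ℝ (Fin n))
    (p : EuclideanSpace ℝ (Fin n) × EuclideanSpace ℝ (Fin n)) :
    EuclideanSpace ℝ (Fin n) × EuclideanSpace ℝ (Fin n) :=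
  (F p.1, ‖ContinuousLinearMap.adjoint (fderiv ℝ G (F p.1)) p.2‖⁻¹ •
    ContinuousLinearMap.adjoint (fderiv ℝ G (F p.1)) p.2)

open Filter Topology Set NormedSpace Function
open scoped RealInnerProductSpace ENNReal NNReal

section Taylor

variable {E F : Type*} [NormedAddCommGroup E] [NormedSpace ℝ E]
  [NormedAddCommGroup F] [NormedSpace ℝ F]

theorem ContDiffAt.isBigO_sub_sub_fderiv {f : E → F} {x : E} (hf : ContDiffAt ℝ 2 f x) :
    (fun y => f y - f x - fderiv ℝ f x (y - x)) =O[𝓝 x] fun y => ‖y - x‖ ^ 2 := by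
  obtain ⟨K, t, ht, hK⟩ := (hf.fderiv_right (m := 1) le_rfl).exists_lipschitzOnWith
  have hdiff : ∀ᶠ y in 𝓝 x, DifferentiableAt ℝ f y :=
    (hf.eventually (by simp)).mono fun y hy => hy.differentiableAt two_ne_zero
  obtain ⟨ε, hε, hball⟩ := Metric.mem_nhds_iff.1 (inter_mem ht hdiff)
  refine Asymptotics.IsBigO.of_bound K (eventually_of_mem (ball_mem_nhds x hε) fun y hy => ?_)
  have hsub : closedBall x ‖y - x‖ ⊆ t ∩ {y | DifferentiableAt ℝ f y} :=
    (closedBall_subset_ball (by rwa [← dist_eq_norm])).trans hball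
  have hbound : ∀ z ∈ closedBall x ‖y - x‖, ‖fderiv ℝ f z - fderiv ℝ f x‖ ≤ K * ‖y - x‖ := by
    intro z hz
    calc ‖fderiv ℝ f z - fderiv ℝ f x‖ ≤ K * ‖z - x‖ := by
          rw [← dist_eq_norm, ← dist_eq_norm]
          exact hK.dist_le_mul z (hsub hz).1 x (hsub (mem_closedBall_self (norm_nonneg _))).1
      _ ≤ K * ‖y - x‖ := by gcongr; rwa [← dist_eq_norm]
  calc ‖f y - f x - fderiv ℝ f x (y - x)‖ ≤ K * ‖y - x‖ * ‖y - x‖ :=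
        (convex_closedBall x _).norm_image_sub_le_of_norm_hasFDerivWithin_le'
          (fun z hz => ((hsub hz).2.hasFDerivAt).hasFDerivWithinAt) hbound
          (mem_closedBall_self (norm_nonneg _)) (by simp [dist_eq_norm])
    _ = K * ‖‖y - x‖ ^ 2‖ := by simp [sq, mul_assoc]

end Taylor

section ProximalNormal

variable {E : Type*} [NormedAddCommGroup E] [InnerProductSpace ℝ E]

def IsProximalNormal (A : Set E) (a v : E) : Prop :=
  ∃ K : ℝ, ∀ᶠ x in 𝓝[A] a, ⟪x - a, v⟫ ≤ K * ‖x - a‖ ^ 2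

theorem infDist_add_smul_eq_iff {A : Set E} {a u : E} (ha : a ∈ A) (hu : ‖u‖ = 1) {s : ℝ}
    (hs : 0 < s) : infDist (a + s • u) A = s ↔ ∀ x ∈ A, 2 * s * ⟪x - a, u⟫ ≤ ‖x - a‖ ^ 2 := by
  have hsu : ‖s • u‖ = s := by rw [norm_smul, hu, mul_one, Real.norm_of_nonneg hs.le]
  have hle : infDist (a + s • u) A ≤ s := by
    simpa [dist_eq_norm, hsu] using infDist_le_dist_of_mem (x := a + s • u) ha
  rw [le_antisymm_iff, and_iff_right hle, le_infDist ⟨a, ha⟩]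
  refine forall₂_congr fun x _ => ?_
  rw [dist_eq_norm, show a + s • u - x = -(x - a - s • u) by abel, norm_neg,
    ← sq_le_sq₀ hs.le (norm_nonneg _), norm_sub_sq_real, hsu, inner_smul_right]
  constructor <;> intro h <;> linarith

theorem isProximalNormal_iff_exists_infDist_eq {A : Set E} {a u : E} (ha : a ∈ A)
    (hu : ‖u‖ = 1) : IsProximalNormal A a u ↔ ∃ s > 0, infDist (a + s • u) A = s := by
  constructor
  · rintro ⟨K, hK⟩
    obtain ⟨δ, hδ, hball⟩ := Metric.mem_nhdsWithin_iff.1 hK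
    set L := max K 1
    refine ⟨min (δ / 2) (2 * L)⁻¹, by positivity, (infDist_add_smul_eq_iff ha hu (by positivity)).2
      fun x hx => ?_⟩
    set s := min (δ / 2) (2 * L)⁻¹
    have hL : 0 < L := lt_max_of_lt_right one_pos
    have hs : 0 < s := by positivity
    by_cases hxδ : ‖x - a‖ < δ
    · have hxK : ⟪x - a, u⟫ ≤ L * ‖x - a‖ ^ 2 :=
        (hball ⟨by rwa [mem_ball, dist_eq_norm], hx⟩).trans
          (mul_le_mul_of_nonneg_right (le_max_left _ _) (sq_nonneg _))
      have hsL : 2 * s * L ≤ 1 :=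
        calc 2 * s * L = s * (2 * L) := by ring
          _ ≤ (2 * L)⁻¹ * (2 * L) := by gcongr; exact min_le_right _ _
          _ = 1 := inv_mul_cancel₀ (by positivity)
      calc 2 * s * ⟪x - a, u⟫ ≤ 2 * s * (L * ‖x - a‖ ^ 2) := by gcongr
        _ = 2 * s * L * ‖x - a‖ ^ 2 := by ring
        _ ≤ 1 * ‖x - a‖ ^ 2 := by gcongr
        _ = ‖x - a‖ ^ 2 := one_mul _
    · have hinner : ⟪x - a, u⟫ ≤ ‖x - a‖ := by
        simpa [hu] using real_inner_le_norm (x - a) u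
      have hfar : 2 * s ≤ ‖x - a‖ := by linarith [min_le_left (δ / 2) (2 * L)⁻¹]
      calc 2 * s * ⟪x - a, u⟫ ≤ 2 * s * ‖x - a‖ := by gcongr
        _ ≤ ‖x - a‖ ^ 2 := by rw [sq]; gcongr
  · rintro ⟨s, hs, hds⟩
    refine ⟨(2 * s)⁻¹, eventually_nhdsWithin_of_forall fun x hx => ?_⟩
    have := (infDist_add_smul_eq_iff ha hu hs).1 hds x hx
    rw [inv_mul_eq_div, le_div_iff₀ (by positivity)]
    linarith

theorem IsProximalNormal.smul {A : Set E} {a v : E} (h : IsProximalNormal A a v) {c : ℝ}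
    (hc : 0 ≤ c) : IsProximalNormal A a (c • v) := by
  obtain ⟨K, hK⟩ := h
  refine ⟨c * K, hK.mono fun x hx => ?_⟩
  rw [inner_smul_right, mul_assoc]
  exact mul_le_mul_of_nonneg_left hx hc

theorem IsProximalNormal.preimage [CompleteSpace E] {A S : Set E} {G : E → E} {b u : E}
    (h : IsProximalNormal A (G b) u) (hG : ContDiffAt ℝ 2 G b) (hS : MapsTo G S A) :
    IsProximalNormal S b (ContinuousLinearMap.adjoint (fderiv ℝ G b) u) := by
  obtain ⟨K, hK⟩ := h
  obtain ⟨C, hC⟩ := hG.isBigO_sub_sub_fderiv.bound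
  obtain ⟨M, hM⟩ := ((hG.differentiableAt two_ne_zero).hasFDerivAt.isBigO_sub).bound
  have hKS : ∀ᶠ x in 𝓝[S] b, ⟪G x - G b, u⟫ ≤ K * ‖G x - G b‖ ^ 2 :=
    (hG.continuousAt.continuousWithinAt.tendsto_nhdsWithin hS).eventually hK
  refine ⟨max K 0 * M ^ 2 + C * ‖u‖, ?_⟩
  filter_upwards [hKS, nhdsWithin_le_nhds hC, nhdsWithin_le_nhds hM] with x hxK hxC hxM
  rw [norm_pow, norm_norm] at hxC
  set e := G x - G b - fderiv ℝ G b (x - b)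
  calc ⟪x - b, ContinuousLinearMap.adjoint (fderiv ℝ G b) u⟫ = ⟪G x - G b, u⟫ - ⟪e, u⟫ := by
        rw [ContinuousLinearMap.adjoint_inner_right, ← inner_sub_left, sub_sub_cancel]
    _ ≤ max K 0 * ‖G x - G b‖ ^ 2 + ‖e‖ * ‖u‖ := by
        rw [sub_eq_add_neg]
        exact add_le_add (hxK.trans (by gcongr; exact le_max_left _ _))
          ((neg_le_abs _).trans (abs_real_inner_le_norm _ _))
    _ ≤ max K 0 * (M * ‖x - b‖) ^ 2 + C * ‖x - b‖ ^ 2 * ‖u‖ := by gcongr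
    _ = (max K 0 * M ^ 2 + C * ‖u‖) * ‖x - b‖ ^ 2 := by ring

end ProximalNormal

theorem ENNReal.pos_and_ne_top_iff_of_le_mul {a b c c' : ℝ≥0∞} (hc : c ≠ ⊤) (hc' : c' ≠ ⊤)
    (hab : a ≤ c * b) (hba : b ≤ c' * a) : (0 < a ∧ a ≠ ⊤) ↔ (0 < b ∧ b ≠ ⊤) := by
  have key : ∀ {a b c c' : ℝ≥0∞}, c' ≠ ⊤ → a ≤ c * b → b ≤ c' * a → 0 < a → a ≠ ⊤ →
      0 < b ∧ b ≠ ⊤ := fun hc' hab hba ha ha' =>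
    ⟨pos_iff_ne_zero.2 fun hb => ha.ne' (le_zero_iff.1 (by simpa [hb] using hab)),
      ne_top_of_le_ne_top (ENNReal.mul_ne_top hc' ha') hba⟩
  exact ⟨fun h => key hc' hab hba h.1 h.2, fun h => key hc hba hab h.1 h.2⟩

theorem LipschitzOnWith.hausdorffMeasure_image_pos_and_ne_top_iff {X Y : Type*}
    [EMetricSpace X] [EMetricSpace Y] [MeasurableSpace X] [BorelSpace X]
    [MeasurableSpace Y] [BorelSpace Y] {f : X → Y} {g : Y → X} {s : Set X} {K K' : ℝ≥0}
    (hf : LipschitzOnWith K f s) (hg : LipschitzOnWith K' g (f '' s)) (hgf : LeftInvOn g f s)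
    {d : ℝ} (hd : 0 ≤ d) :
    (0 < μH[d] (f '' s) ∧ μH[d] (f '' s) ≠ ⊤) ↔ (0 < μH[d] s ∧ μH[d] s ≠ ⊤) := by
  have hg_le := hg.hausdorffMeasure_image_le hd
  rw [hgf.image_image] at hg_le
  exact ENNReal.pos_and_ne_top_iff_of_le_mul (ENNReal.rpow_ne_top_of_nonneg hd ENNReal.coe_ne_top)
    (ENNReal.rpow_ne_top_of_nonneg hd ENNReal.coe_ne_top) (hf.hausdorffMeasure_image_le hd) hg_le

section Normalize

variable {V W : Type*} [NormedAddCommGroup V] [NormedAddCommGroup W]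

theorem ContinuousLinearMap.apply_ne_zero_of_comp_eq_id [NormedSpace ℝ V] [NormedSpace ℝ W]
    {B : V →L[ℝ] W} {B' : W →L[ℝ] V} (h : B' ∘L B = .id ℝ V) {u : V} (hu : u ≠ 0) : B u ≠ 0 := by
  intro hBu
  apply hu
  simpa [hBu] using (DFunLike.congr_fun h u).symm

theorem normalize_apply_normalize [NormedSpace ℝ V] [NormedSpace ℝ W]
    {B : V →L[ℝ] W} {B' : W →L[ℝ] V} (h : B ∘L B' = .id ℝ W) {v : W} (hv : ‖v‖ = 1) :
    NormedSpace.normalize (B (NormedSpace.normalize (B' v))) = v := by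
  have hB'v : B' v ≠ 0 :=
    ContinuousLinearMap.apply_ne_zero_of_comp_eq_id h (ne_zero_of_norm_ne_zero (hv ▸ one_ne_zero))
  have hBB'v : B (B' v) = v := by simpa using DFunLike.congr_fun h v
  change NormedSpace.normalize (B (‖B' v‖⁻¹ • B' v)) = v
  rw [map_smul, hBB'v, normalize_smul_of_pos (inv_pos.2 (norm_pos_iff.2 hB'v)),
    normalize_eq_self_of_norm_eq_one hv]

theorem ContDiffAt.normalize [InnerProductSpace ℝ V] {x : V} (hx : x ≠ 0) {k : ℕ∞} :
    ContDiffAt ℝ k NormedSpace.normalize x :=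
  ((contDiffAt_norm ℝ hx).inv (norm_ne_zero_iff.2 hx)).smul contDiffAt_id

theorem IsCompact.exists_lipschitzOnWith_normalize_apply [NormedSpace ℝ V]
    [InnerProductSpace ℝ W] {B : V →L[ℝ] W} {s : Set V} (hs : IsCompact s)
    (hB : ∀ u ∈ s, B u ≠ 0) : ∃ K, LipschitzOnWith K (fun u => NormedSpace.normalize (B u)) s := by
  refine LocallyLipschitzOn.exists_lipschitzOnWith_of_compact hs fun u hu => ?_
  obtain ⟨K, t, ht, hK⟩ := ((ContDiffAt.normalize (k := 1) (hB u hu)).comp u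
    B.contDiff.contDiffAt).exists_lipschitzOnWith
  exact ⟨K, t, mem_nhdsWithin_of_mem_nhds ht, hK⟩

end Normalize

theorem fderiv_comp_fderiv_of_leftInverse {𝕜 E F : Type*} [NontriviallyNormedField 𝕜]
    [NormedAddCommGroup E] [NormedSpace 𝕜 E] [NormedAddCommGroup F] [NormedSpace 𝕜 F]
    {f : E → F} {g : F → E} (hgf : LeftInverse g f) {x : E} (hf : DifferentiableAt 𝕜 f x)
    (hg : DifferentiableAt 𝕜 g (f x)) : fderiv 𝕜 g (f x) ∘L fderiv 𝕜 f x = .id 𝕜 E := by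
  rw [← fderiv_comp x hg hf, hgf.comp_eq_id, fderiv_id]

theorem fderiv_comp_fderiv_of_rightInverse {𝕜 E F : Type*} [NontriviallyNormedField 𝕜]
    [NormedAddCommGroup E] [NormedSpace 𝕜 E] [NormedAddCommGroup F] [NormedSpace 𝕜 F]
    {f : E → F} {g : F → E} (hgf : LeftInverse g f) (hfg : LeftInverse f g) {x : E}
    (hf : DifferentiableAt 𝕜 f x) (hg : DifferentiableAt 𝕜 g (f x)) :
    fderiv 𝕜 f x ∘L fderiv 𝕜 g (f x) = .id 𝕜 F := by
  have hf' : DifferentiableAt 𝕜 f (g (f x)) := by rwa [hgf x]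
  simpa only [hgf x] using fderiv_comp_fderiv_of_leftInverse hfg hg hf'

theorem ContinuousLinearMap.adjoint_comp_adjoint_eq_id {E : Type*} [NormedAddCommGroup E]
    [InnerProductSpace ℝ E] [CompleteSpace E] {D D' : E →L[ℝ] E} (h : D ∘L D' = .id ℝ E) :
    adjoint D' ∘L adjoint D = .id ℝ E := by
  rw [← adjoint_comp, h, adjoint_id]

section NormalBundle

variable {n : ℕ}

theorem mem_normalBundle_iff {A : Set (EuclideanSpace ℝ (Fin n))}
    {a u : EuclideanSpace ℝ (Fin n)} :
    (a, u) ∈ normalBundle A ↔ a ∈ A ∧ ‖u‖ = 1 ∧ IsProximalNormal A a u :=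
  and_congr_right fun ha => and_congr_right fun hu =>
    (isProximalNormal_iff_exists_infDist_eq ha hu).symm

theorem nuMap_mem_normalBundle {A : Set (EuclideanSpace ℝ (Fin n))}
    {F G : EuclideanSpace ℝ (Fin n) → EuclideanSpace ℝ (Fin n)} (hGF : LeftInverse G F)
    {a u : EuclideanSpace ℝ (Fin n)} (hF : DifferentiableAt ℝ F a) (hG : ContDiffAt ℝ 2 G (F a))
    (h : (a, u) ∈ normalBundle A) : nuMap F G (a, u) ∈ normalBundle (F '' A) := by
  obtain ⟨ha, hu, hnormal⟩ := mem_normalBundle_iff.1 h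
  have hGA : MapsTo G (F '' A) A := by
    rintro _ ⟨x, hx, rfl⟩
    rwa [hGF x]
  have hBu : ContinuousLinearMap.adjoint (fderiv ℝ G (F a)) u ≠ 0 :=
    ContinuousLinearMap.apply_ne_zero_of_comp_eq_id
      (ContinuousLinearMap.adjoint_comp_adjoint_eq_id
        (fderiv_comp_fderiv_of_leftInverse hGF hF (hG.differentiableAt two_ne_zero)))
      (ne_zero_of_norm_ne_zero (hu ▸ one_ne_zero))
  rw [← hGF a] at hnormal
  exact mem_normalBundle_iff.2 ⟨mem_image_of_mem F ha, norm_normalize hBu,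
    (hnormal.preimage hG hGA).smul (inv_nonneg.2 (norm_nonneg _))⟩

theorem setOf_mem_normalBundle_image {A : Set (EuclideanSpace ℝ (Fin n))}
    {F G : EuclideanSpace ℝ (Fin n) → EuclideanSpace ℝ (Fin n)} (hF : ContDiff ℝ 2 F)
    (hG : ContDiff ℝ 2 G) (hGF : LeftInverse G F) (hFG : LeftInverse F G)
    (a : EuclideanSpace ℝ (Fin n)) :
    {v | (F a, v) ∈ normalBundle (F '' A)} =
      (fun u => NormedSpace.normalize (ContinuousLinearMap.adjoint (fderiv ℝ G (F a)) u)) ''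
        {u | (a, u) ∈ normalBundle A} := by
  ext v
  constructor
  · intro hv
    have hFD := fderiv_comp_fderiv_of_rightInverse hGF hFG (hF.differentiable two_ne_zero a)
      (hG.differentiable two_ne_zero (F a))
    have h := nuMap_mem_normalBundle hFG (hG.differentiable two_ne_zero (F a)) hF.contDiffAt hv
    rw [hGF.image_image] at h
    simp only [nuMap, hGF a] at h
    exact ⟨_, h, normalize_apply_normalize (ContinuousLinearMap.adjoint_comp_adjoint_eq_id hFD)
      (mem_normalBundle_iff.1 hv).2.1⟩
  · rintro ⟨u, hu, rfl⟩
    exact nuMap_mem_normalBundle hGF (hF.differentiable two_ne_zero a) hG.contDiffAt hu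

theorem apply_mem_stratum_image_iff {A : Set (EuclideanSpace ℝ (Fin n))}
    {F G : EuclideanSpace ℝ (Fin n) → EuclideanSpace ℝ (Fin n)} (hF : ContDiff ℝ 2 F)
    (hG : ContDiff ℝ 2 G) (hGF : LeftInverse G F) (hFG : LeftInverse F G)
    {a : EuclideanSpace ℝ (Fin n)} {m : ℕ} :
    F a ∈ stratum (F '' A) m ↔ a ∈ stratum A m := by
  set B := ContinuousLinearMap.adjoint (fderiv ℝ G (F a))
  set B' := ContinuousLinearMap.adjoint (fderiv ℝ F a)
  have hFD := fderiv_comp_fderiv_of_rightInverse hGF hFG (hF.differentiable two_ne_zero a)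
    (hG.differentiable two_ne_zero (F a))
  have hB'B : B' ∘L B = .id ℝ _ := ContinuousLinearMap.adjoint_comp_adjoint_eq_id
    (fderiv_comp_fderiv_of_leftInverse hGF (hF.differentiable two_ne_zero a)
      (hG.differentiable two_ne_zero _))
  have hBB' : B ∘L B' = .id ℝ _ := ContinuousLinearMap.adjoint_comp_adjoint_eq_id hFD
  have hsphere : ∀ {x} {S : Set (EuclideanSpace ℝ (Fin n))},
      {v | (x, v) ∈ normalBundle S} ⊆ sphere 0 1 := fun hv =>
    mem_sphere_zero_iff_norm.2 (mem_normalBundle_iff.1 hv).2.1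
  obtain ⟨K, hK⟩ := (isCompact_sphere 0 1).exists_lipschitzOnWith_normalize_apply fun u hu =>
    B.apply_ne_zero_of_comp_eq_id hB'B (ne_zero_of_mem_unit_sphere ⟨u, hu⟩)
  obtain ⟨K', hK'⟩ := (isCompact_sphere 0 1).exists_lipschitzOnWith_normalize_apply fun u hu =>
    B'.apply_ne_zero_of_comp_eq_id hBB' (ne_zero_of_mem_unit_sphere ⟨u, hu⟩)
  have hfiber := setOf_mem_normalBundle_image (A := A) hF hG hGF hFG a
  simp only [stratum, mem_ofPred_eq, hGF.injective.mem_set_image]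
  refine and_congr_right fun _ => ?_
  rw [hfiber]
  exact (hK.mono hsphere).hausdorffMeasure_image_pos_and_ne_top_iff
    (hK'.mono (hfiber ▸ hsphere)) (fun u hu => normalize_apply_normalize hB'B
      (mem_normalBundle_iff.1 hu).2.1) (Nat.cast_nonneg _)

end NormalBundle

theorem stmt2_general {n : ℕ} (A : Set (EuclideanSpace ℝ (Fin n)))
    (F G : EuclideanSpace ℝ (Fin n) → EuclideanSpace ℝ (Fin n))
    (hF : ContDiff ℝ 2 F) (hG : ContDiff ℝ 2 G)
    (hGF : ∀ x, G (F x) = x) (hFG : ∀ x, F (G x) = x)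
    (m : ℕ) :
    F '' stratum A m = stratum (F '' A) m := by
  ext b
  constructor
  · rintro ⟨a, ha, rfl⟩
    exact (apply_mem_stratum_image_iff hF hG hGF hFG).2 ha
  · intro hb
    obtain ⟨a, -, rfl⟩ := hb.1
    exact ⟨a, (apply_mem_stratum_image_iff hF hG hGF hFG).1 hb, rfl⟩

/-- If `A ⊆ ℝⁿ` is closed and `F : ℝⁿ → ℝⁿ` is a `C²` diffeomorphism of `ℝⁿ` onto `ℝⁿ` with
inverse `G`, then `F(A^(m)) = (F(A))^(m)` for every `0 ≤ m ≤ n - 1`. -/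
theorem stmt2 {n : ℕ} (hn : 1 ≤ n) (A : Set (EuclideanSpace ℝ (Fin n))) (hA : IsClosed A)
    (F G : EuclideanSpace ℝ (Fin n) → EuclideanSpace ℝ (Fin n))
    (hF : ContDiff ℝ 2 F) (hG : ContDiff ℝ 2 G)
    (hGF : ∀ x, G (F x) = x) (hFG : ∀ x, F (G x) = x)
    (m : ℕ) (hm : m ≤ n - 1) :
    F '' stratum A m = stratum (F '' A) m :=
  stmt2_general A F G hF hG hGF hFG m
end

section
/- Let 1 ≤ m < n be integers, let A ⊆ ℝⁿ be a closed set, let Ω ⊆ ℝⁿ be an open set, and let C = Clos(A ∩ Ω) be the closure of A ∩ Ω in ℝⁿ. If N(A) satisfies the m-dimensional Lusin (N) condition in Ω, then N(C) satisfies the m-dimensional Lusin (N) condition in Ω. -/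
open MeasureTheory Metric

/-- `N(A)` satisfies the `m`-dimensional Lusin (N) condition in the open set `Ω`:
`H^{n-1}(N(A)|S) = 0` whenever `S ⊆ A ∩ Ω` satisfies `H^m(A^(m) ∩ S) = 0`. -/
def LusinN {n : ℕ} (A : Set (EuclideanSpace ℝ (Fin n))) (m : ℕ)
    (Ω : Set (EuclideanSpace ℝ (Fin n))) : Prop :=
  ∀ S : Set (EuclideanSpace ℝ (Fin n)), S ⊆ A ∩ Ω →
    μH[(m : ℝ)] (stratum A m ∩ S) = 0 →
      μH[((n : ℝ) - 1)] {p | p ∈ normalBundle A ∧ p.1 ∈ S} = 0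

/-!
Near a point `a ∈ A ∩ Ω` the sets `A` and `C = Clos(A ∩ Ω)` coincide, so for small `s > 0`
the points `a + s u` have the same distance to `A` and to `C`; since the condition
`δ_A(a + s u) = s` passes from `s` to every smaller `s' > 0`, the normal cones `N(A, a)` and
`N(C, a)` agree. Hence `C` and `A` have the same strata and the same normal bundle over every
`S ⊆ C ∩ Ω ⊆ A ∩ Ω`, and the Lusin condition transfers verbatim.
-/

lemma infDist_eq_of_inter_ball_subset {X : Type*} [PseudoMetricSpace X] {A B : Set X}
    {a x : X} {r : ℝ} (hBA : B ⊆ A) (ha : a ∈ B) (hloc : A ∩ ball a (2 * r) ⊆ B)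
    (hx : dist x a ≤ r) :
    infDist x B = infDist x A := by
  refine le_antisymm ?_ (infDist_le_infDist_of_subset hBA ⟨a, ha⟩)
  by_contra! hlt
  obtain ⟨b, hb, hxb⟩ := (infDist_lt_iff ⟨a, hBA ha⟩).1 hlt
  have hxa := infDist_le_dist_of_mem (x := x) ha
  have hbB : b ∈ B := hloc ⟨hb, by rw [mem_ball]; linarith [dist_triangle_left b a x]⟩
  linarith [infDist_le_dist_of_mem (x := x) hbB]

section InfDist

variable {E : Type*} [NormedAddCommGroup E] [NormedSpace ℝ E]

lemma dist_add_smul_self {a u : E} (hu : ‖u‖ = 1) {t : ℝ} (ht : 0 ≤ t) :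
    dist (a + t • u) a = t := by
  rw [dist_eq_norm, add_sub_cancel_left, norm_smul, hu, mul_one, Real.norm_of_nonneg ht]

lemma infDist_add_smul_eq_of_le {X : Set E} {a u : E} (ha : a ∈ X) (hu : ‖u‖ = 1)
    {s s' : ℝ} (hs' : 0 < s') (hle : s' ≤ s) (h : infDist (a + s • u) X = s) :
    infDist (a + s' • u) X = s' := by
  refine le_antisymm ?_ ?_
  · simpa [dist_add_smul_self hu hs'.le] using infDist_le_dist_of_mem (x := a + s' • u) ha
  by_contra! hlt
  obtain ⟨b, hb, hdb⟩ := (infDist_lt_iff ⟨a, ha⟩).1 hlt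
  have hseg : dist (a + s • u) (a + s' • u) = s - s' := by
    have hsplit : a + s • u = (a + s' • u) + (s - s') • u := by rw [sub_smul]; abel
    rw [hsplit, dist_add_smul_self hu (sub_nonneg.2 hle)]
  have := infDist_le_dist_of_mem (x := a + s • u) hb
  linarith [dist_triangle (a + s • u) (a + s' • u) b]

end InfDist

section NormalBundle

variable {n : ℕ}

lemma mem_normalBundle_iff_of_inter_ball_subset {A B : Set (EuclideanSpace ℝ (Fin n))}
    {a : EuclideanSpace ℝ (Fin n)} {ε : ℝ} (hε : 0 < ε) (hBA : B ⊆ A) (ha : a ∈ B)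
    (hloc : A ∩ ball a ε ⊆ B) (u : EuclideanSpace ℝ (Fin n)) :
    (a, u) ∈ normalBundle B ↔ (a, u) ∈ normalBundle A := by
  have hε2 : 0 < ε / 2 := half_pos hε
  have hnear : ∀ s, 0 ≤ s → s ≤ ε / 2 → ‖u‖ = 1 →
      infDist (a + s • u) B = infDist (a + s • u) A := fun s hs hsε hu =>
    infDist_eq_of_inter_ball_subset hBA ha (by rwa [mul_div_cancel₀ _ two_ne_zero])
      (by rwa [dist_add_smul_self hu hs])
  constructor
  · rintro ⟨-, hu, s, hs, hds⟩
    have hs' : 0 < min s (ε / 2) := lt_min hs hε2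
    refine ⟨hBA ha, hu, min s (ε / 2), hs', ?_⟩
    rw [← hnear _ hs'.le (min_le_right _ _) hu]
    exact infDist_add_smul_eq_of_le ha hu hs' (min_le_left _ _) hds
  · rintro ⟨-, hu, s, hs, hds⟩
    have hs' : 0 < min s (ε / 2) := lt_min hs hε2
    refine ⟨ha, hu, min s (ε / 2), hs', ?_⟩
    rw [hnear _ hs'.le (min_le_right _ _) hu]
    exact infDist_add_smul_eq_of_le (hBA ha) hu hs' (min_le_left _ _) hds

lemma mem_normalBundle_closure_inter_iff {A Ω : Set (EuclideanSpace ℝ (Fin n))}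
    (hA : IsClosed A) (hΩ : IsOpen Ω) {a : EuclideanSpace ℝ (Fin n)} (ha : a ∈ A ∩ Ω)
    (u : EuclideanSpace ℝ (Fin n)) :
    (a, u) ∈ normalBundle (closure (A ∩ Ω)) ↔ (a, u) ∈ normalBundle A := by
  obtain ⟨ε, hε, hball⟩ := Metric.isOpen_iff.1 hΩ a ha.2
  refine mem_normalBundle_iff_of_inter_ball_subset hε
    (closure_minimal Set.inter_subset_left hA) (subset_closure ha) ?_ u
  exact fun x hx => subset_closure ⟨hx.1, hball hx.2⟩

lemma LusinN.of_mem_normalBundle_iff {A B Ω : Set (EuclideanSpace ℝ (Fin n))} {m : ℕ}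
    (hA : LusinN A m Ω) (hBA : B ∩ Ω ⊆ A)
    (hN : ∀ a ∈ B ∩ Ω, ∀ u, (a, u) ∈ normalBundle B ↔ (a, u) ∈ normalBundle A) :
    LusinN B m Ω := by
  intro S hS hS0
  have hSA : S ⊆ A ∩ Ω := fun x hx => ⟨hBA (hS hx), (hS hx).2⟩
  have hslice : ∀ a ∈ S, {u | (a, u) ∈ normalBundle B} = {u | (a, u) ∈ normalBundle A} :=
    fun a ha => Set.ext (hN a (hS ha))
  have hstratum : stratum B m ∩ S = stratum A m ∩ S := by
    ext a
    refine and_congr_left fun ha => ?_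
    simp only [stratum, Set.mem_ofPred_eq, hslice a ha, (hS ha).1, (hSA ha).1, true_and]
  have hbundle : {p | p ∈ normalBundle B ∧ p.1 ∈ S} = {p | p ∈ normalBundle A ∧ p.1 ∈ S} := by
    ext ⟨a, u⟩
    exact and_congr_left fun ha => hN a (hS ha) u
  rw [hbundle]
  exact hA S hSA (hstratum ▸ hS0)

end NormalBundle

theorem stmt5_general {n m : ℕ}
    (A : Set (EuclideanSpace ℝ (Fin n))) (hA : IsClosed A)
    (Ω : Set (EuclideanSpace ℝ (Fin n))) (hΩ : IsOpen Ω)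
    (hLusin : LusinN A m Ω) :
    LusinN (closure (A ∩ Ω)) m Ω := by
  have hCA : closure (A ∩ Ω) ⊆ A := closure_minimal Set.inter_subset_left hA
  exact hLusin.of_mem_normalBundle_iff (fun _ ha => hCA ha.1)
    fun _ ha => mem_normalBundle_closure_inter_iff hA hΩ ⟨hCA ha.1, ha.2⟩

/-- If `1 ≤ m < n`, `A ⊆ ℝⁿ` is closed, `Ω ⊆ ℝⁿ` is open, `C = Clos(A ∩ Ω)` and `N(A)`
satisfies the `m`-dimensional Lusin (N) condition in `Ω`, then so does `N(C)`. -/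
theorem stmt5 {n m : ℕ} (hm : 1 ≤ m) (hmn : m < n)
    (A : Set (EuclideanSpace ℝ (Fin n))) (hA : IsClosed A)
    (Ω : Set (EuclideanSpace ℝ (Fin n))) (hΩ : IsOpen Ω)
    (hLusin : LusinN A m Ω) :
    LusinN (closure (A ∩ Ω)) m Ω :=
  stmt5_general A hA Ω hΩ hLusin
end

section
/- Let n ≥ 2, let v ∈ ℝⁿ be a unit vector, let T = {x ∈ ℝⁿ : x·v = 0} with orthogonal projection T_♮ onto T, let r > 0, and let F : ℝⁿ → ℝⁿ be the diffeomorphism F(x) = x + (r/8)v − (4r)⁻¹|T_♮(x)|² v. Suppose A ⊆ ℝⁿ is closed, 0 ∈ A, A ⊆ {x : |T_♮(x)| ≤ 4r and |x·v| ≤ 4r}, and x·v ≤ r/16 for every x ∈ A. Then H^{n−1}({η ∈ S^{n−1} : there exists z ∈ F(A) with |T_♮(z)| ≤ r and |z·v| ≤ r such that (w − z)·η ≤ 0 for every w ∈ F(A)}) ≥ α_{n−1}·(1 + 32²)^{−(n−1)/2}, where α_{n−1} is the Lebesgue measure of the unit ball in ℝ^{n−1}. -/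
/-!
Let `η` be a unit vector in the cone `32 |T_♮ η| ≤ η · v`. A point `z = F(x)` of the compact set
`F(A)` maximising `⟪·, η⟫` does at least as well as `F(0) = (r/8) v`; with `q = |T_♮ x|` this
gives `q² / (4r) ≤ x · v + q / 32 ≤ r / 16 + q / 32`, which forces `q ≤ r`, so `z` lies in the
cylinder `|T_♮ z| ≤ r`, `|z · v| ≤ r` and `η` belongs to the set. The image of this spherical cap
under the 1-Lipschitz map `T_♮` is the ball of radius `(1 + 32²)^(-1/2)` in `T ≅ ℝⁿ⁻¹`, whose
`(n-1)`-dimensional Hausdorff measure dominates its Lebesgue measure.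
-/

open MeasureTheory Metric Module
open scoped RealInnerProductSpace

section UnitVector

variable {E : Type*} [NormedAddCommGroup E] [InnerProductSpace ℝ E] {v : E}

lemma norm_sub_inner_smul_sq_add_inner_sq (hv : ‖v‖ = 1) (x : E) :
    ‖x - ⟪x, v⟫ • v‖ ^ 2 + ⟪x, v⟫ ^ 2 = ‖x‖ ^ 2 := by
  rw [norm_sub_sq_real, real_inner_smul_right, norm_smul, hv, Real.norm_eq_abs, mul_one, sq_abs]
  ring

lemma norm_sub_inner_smul_le (hv : ‖v‖ = 1) (x : E) : ‖x - ⟪x, v⟫ • v‖ ≤ ‖x‖ := by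
  refine (pow_le_pow_iff_left₀ (norm_nonneg _) (norm_nonneg _) two_ne_zero).1 ?_
  rw [← norm_sub_inner_smul_sq_add_inner_sq hv x]
  exact le_add_of_nonneg_right (sq_nonneg _)

lemma norm_le_norm_sub_inner_smul_add_abs_inner (hv : ‖v‖ = 1) (x : E) :
    ‖x‖ ≤ ‖x - ⟪x, v⟫ • v‖ + |⟪x, v⟫| := by
  simpa [norm_smul, hv] using norm_add_le (x - ⟪x, v⟫ • v) (⟪x, v⟫ • v)

lemma lipschitzWith_one_sub_inner_smul (hv : ‖v‖ = 1) :
    LipschitzWith 1 fun x : E => x - ⟪x, v⟫ • v := by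
  refine LipschitzWith.of_dist_le_mul fun x y => ?_
  have hlin : x - ⟪x, v⟫ • v - (y - ⟪y, v⟫ • v) = x - y - ⟪x - y, v⟫ • v := by
    rw [inner_sub_left, sub_smul]
    abel
  simpa [dist_eq_norm, hlin] using norm_sub_inner_smul_le hv (x - y)

lemma inner_eq_inner_sub_inner_smul_add (hv : ‖v‖ = 1) (x y : E) :
    ⟪x, y⟫ = ⟪x - ⟪x, v⟫ • v, y - ⟪y, v⟫ • v⟫ + ⟪x, v⟫ * ⟪y, v⟫ := by
  simp only [inner_sub_left, inner_sub_right, real_inner_smul_left, real_inner_smul_right,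
    real_inner_self_eq_norm_sq, hv, real_inner_comm y v]
  ring

lemma exists_norm_eq_one_sub_inner_smul_eq (hv : ‖v‖ = 1) {τ : E} (hτv : ⟪τ, v⟫ = 0)
    (hτ : ‖τ‖ ≤ 1) :
    ∃ η : E, ‖η‖ = 1 ∧ η - ⟪η, v⟫ • v = τ ∧ ⟪η, v⟫ = √(1 - ‖τ‖ ^ 2) := by
  have hinner : ⟪τ + √(1 - ‖τ‖ ^ 2) • v, v⟫ = √(1 - ‖τ‖ ^ 2) := by
    rw [inner_add_left, hτv, real_inner_smul_left, real_inner_self_eq_norm_sq, hv]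
    ring
  have hproj : τ + √(1 - ‖τ‖ ^ 2) • v - ⟪τ + √(1 - ‖τ‖ ^ 2) • v, v⟫ • v = τ := by
    rw [hinner, add_sub_cancel_right]
  refine ⟨τ + √(1 - ‖τ‖ ^ 2) • v, ?_, hproj, hinner⟩
  have hsq := norm_sub_inner_smul_sq_add_inner_sq hv (τ + √(1 - ‖τ‖ ^ 2) • v)
  rw [hproj, hinner, Real.sq_sqrt (by nlinarith [norm_nonneg τ]), add_sub_cancel] at hsq
  exact (pow_eq_one_iff_of_nonneg (norm_nonneg _) two_ne_zero).1 hsq.symm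

end UnitVector

lemma le_one_and_mul_le_sqrt_of_le_rpow {κ t : ℝ} (hκ : 0 < κ) (ht : 0 ≤ t)
    (h : t ≤ (1 + κ ^ 2) ^ (-(1 / 2 : ℝ))) :
    t ≤ 1 ∧ κ * t ≤ √(1 - t ^ 2) ∧ 0 < √(1 - t ^ 2) := by
  have hpos : (0 : ℝ) < 1 + κ ^ 2 := by positivity
  have hsq : (1 + κ ^ 2) * t ^ 2 ≤ 1 := by
    have := pow_le_pow_left₀ ht h 2
    rw [← Real.rpow_natCast ((1 + κ ^ 2) ^ (-(1 / 2 : ℝ))), ← Real.rpow_mul hpos.le] at this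
    norm_num [Real.rpow_neg_one] at this
    rwa [← le_div_iff₀' hpos, one_div]
  exact ⟨by nlinarith, Real.le_sqrt_of_sq_le (by nlinarith),
    Real.sqrt_pos.2 (by nlinarith [pow_pos hκ 2])⟩

lemma le_and_abs_le_of_le_add {r s q : ℝ} (hr : 0 < r) (hq : 0 ≤ q) (hs : s ≤ r / 16)
    (h : r / 8 ≤ q / 32 + (s + r / 8 - (4 * r)⁻¹ * q ^ 2)) :
    q ≤ r ∧ |s + r / 8 - (4 * r)⁻¹ * q ^ 2| ≤ r := by
  have hq2 : q ^ 2 ≤ (s + q / 32) * (4 * r) := by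
    have h4r : (4 * r)⁻¹ * q ^ 2 ≤ s + q / 32 := by linarith
    have := (inv_mul_le_iff₀ (by positivity : (0 : ℝ) < 4 * r)).1 h4r
    linarith
  have hqr : q ≤ r := by nlinarith
  refine ⟨hqr, abs_le.2 ⟨by linarith, ?_⟩⟩
  have : 0 ≤ (4 * r)⁻¹ * q ^ 2 := by positivity
  linarith

section Paraboloid

variable {E : Type*} [NormedAddCommGroup E] [InnerProductSpace ℝ E] {v : E} {r : ℝ}

noncomputable def paraboloidMap (v : E) (r : ℝ) (x : E) : E :=
  x + (r / 8) • v - ((4 * r)⁻¹ * ‖x - ⟪x, v⟫ • v‖ ^ 2) • v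

lemma continuous_paraboloidMap : Continuous (paraboloidMap v r) := by
  unfold paraboloidMap
  fun_prop

lemma paraboloidMap_zero : paraboloidMap v r 0 = (r / 8) • v := by
  simp [paraboloidMap]

lemma inner_paraboloidMap_self (hv : ‖v‖ = 1) (x : E) :
    ⟪paraboloidMap v r x, v⟫ = ⟪x, v⟫ + r / 8 - (4 * r)⁻¹ * ‖x - ⟪x, v⟫ • v‖ ^ 2 := by
  simp only [paraboloidMap, inner_sub_left, inner_add_left, real_inner_smul_left,
    real_inner_self_eq_norm_sq, hv]
  ring

lemma paraboloidMap_sub_inner_smul (hv : ‖v‖ = 1) (x : E) :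
    paraboloidMap v r x - ⟪paraboloidMap v r x, v⟫ • v = x - ⟪x, v⟫ • v := by
  rw [inner_paraboloidMap_self hv, paraboloidMap]
  module

lemma paraboloidMap_bounds_of_inner_le_inner (hv : ‖v‖ = 1) (hr : 0 < r) {a η : E}
    (ha : ⟪a, v⟫ ≤ r / 16) (hη : 32 * ‖η - ⟪η, v⟫ • v‖ ≤ ⟪η, v⟫) (hηv : 0 < ⟪η, v⟫)
    (hmax : ⟪paraboloidMap v r 0, η⟫ ≤ ⟪paraboloidMap v r a, η⟫) :
    ‖paraboloidMap v r a - ⟪paraboloidMap v r a, v⟫ • v‖ ≤ r ∧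
      |⟪paraboloidMap v r a, v⟫| ≤ r := by
  set q := ‖a - ⟪a, v⟫ • v‖
  have hcs : ⟪a - ⟪a, v⟫ • v, η - ⟪η, v⟫ • v⟫ ≤ q * (⟪η, v⟫ / 32) :=
    (real_inner_le_norm _ _).trans (mul_le_mul_of_nonneg_left (by linarith) (norm_nonneg _))
  rw [paraboloidMap_zero, real_inner_smul_left, real_inner_comm η v,
    inner_eq_inner_sub_inner_smul_add hv (paraboloidMap v r a), paraboloidMap_sub_inner_smul hv,
    inner_paraboloidMap_self hv] at hmax
  rw [paraboloidMap_sub_inner_smul hv, inner_paraboloidMap_self hv]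
  refine le_and_abs_le_of_le_add hr (norm_nonneg _) ha (le_of_mul_le_mul_right ?_ hηv)
  linarith

lemma exists_supporting_point_of_mem_cone (hv : ‖v‖ = 1) (hr : 0 < r) {A : Set E}
    (hA : IsCompact A) (h0 : 0 ∈ A) (hflat : ∀ x ∈ A, ⟪x, v⟫ ≤ r / 16) {η : E}
    (hη : 32 * ‖η - ⟪η, v⟫ • v‖ ≤ ⟪η, v⟫) (hηv : 0 < ⟪η, v⟫) :
    ∃ z ∈ paraboloidMap v r '' A, ‖z - ⟪z, v⟫ • v‖ ≤ r ∧ |⟪z, v⟫| ≤ r ∧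
      ∀ w ∈ paraboloidMap v r '' A, ⟪w - z, η⟫ ≤ 0 := by
  obtain ⟨_, ⟨a, ha, rfl⟩, hmax⟩ := (hA.image continuous_paraboloidMap).exists_isMaxOn
    ⟨_, Set.mem_image_of_mem _ h0⟩ (continuous_id.inner (𝕜 := ℝ) continuous_const).continuousOn
  obtain ⟨hperp, hvert⟩ :=
    paraboloidMap_bounds_of_inner_le_inner hv hr (hflat a ha) hη hηv (hmax ⟨0, h0, rfl⟩)
  refine ⟨_, ⟨a, ha, rfl⟩, hperp, hvert, fun w hw => ?_⟩
  rw [inner_sub_left, sub_nonpos]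
  exact hmax hw

end Paraboloid

lemma EuclideanSpace.volume_le_hausdorffMeasure {m : ℕ} (s : Set (EuclideanSpace ℝ (Fin m))) :
    volume s ≤ μH[m] s := by
  have hpres := (EuclideanSpace.volume_preserving_symm_measurableEquiv_toLp (Fin m)).symm
  have hpi := hausdorffMeasure_pi_real (ι := Fin m)
  rw [Fintype.card_fin] at hpi
  calc volume s = volume (WithLp.toLp 2 ⁻¹' s : Set (Fin m → ℝ)) :=
        (hpres.measure_preimage_equiv s).symm
    _ = μH[m] (WithLp.ofLp '' s) := by
        rw [hpi, Set.image_eq_preimage_of_inverse (fun _ => rfl) (fun _ => rfl)]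
    _ ≤ μH[m] s := by
        simpa using (PiLp.lipschitzWith_ofLp 2 _).hausdorffMeasure_image_le (Nat.cast_nonneg m) s

lemma volume_closedBall_le_hausdorffMeasure {X : Type*} [EMetricSpace X] [MeasurableSpace X]
    [BorelSpace X] {m : ℕ} {ι : EuclideanSpace ℝ (Fin m) → X} (hι : Isometry ι) {f : X → X}
    (hf : LipschitzWith 1 f) {S : Set X} {ρ : ℝ} (h : ι '' closedBall 0 ρ ⊆ f '' S) :
    volume (closedBall (0 : EuclideanSpace ℝ (Fin m)) ρ) ≤ μH[m] S :=
  calc volume (closedBall (0 : EuclideanSpace ℝ (Fin m)) ρ)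
      ≤ μH[m] (closedBall (0 : EuclideanSpace ℝ (Fin m)) ρ) :=
        EuclideanSpace.volume_le_hausdorffMeasure _
    _ = μH[m] (ι '' closedBall 0 ρ) := (hι.hausdorffMeasure_image (Or.inl m.cast_nonneg) _).symm
    _ ≤ μH[m] (f '' S) := measure_mono h
    _ ≤ μH[m] S := by simpa using hf.hausdorffMeasure_image_le m.cast_nonneg S

lemma volume_closedBall_rpow_neg_half {m : ℕ} {a : ℝ} (ha : 0 < a) :
    volume (closedBall (0 : EuclideanSpace ℝ (Fin m)) (a ^ (-(1 / 2 : ℝ)))) =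
      volume (ball (0 : EuclideanSpace ℝ (Fin m)) 1) * ENNReal.ofReal (a ^ (-((m : ℝ) / 2))) := by
  rw [Measure.addHaar_closedBall _ _ (by positivity), finrank_euclideanSpace_fin, mul_comm,
    ← Real.rpow_natCast, ← Real.rpow_mul ha.le]
  ring_nf

lemma exists_linearIsometry_inner_eq_zero {E : Type*} [NormedAddCommGroup E]
    [InnerProductSpace ℝ E] [FiniteDimensional ℝ E] {k : ℕ} (hk : finrank ℝ E = k + 1)
    {v : E} (hv : v ≠ 0) :
    ∃ ι : EuclideanSpace ℝ (Fin k) →ₗᵢ[ℝ] E, ∀ y, ⟪ι y, v⟫ = 0 := by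
  have : Fact (finrank ℝ E = k + 1) := ⟨hk⟩
  exact ⟨(ℝ ∙ v)ᗮ.subtypeₗᵢ.comp
      (OrthonormalBasis.fromOrthogonalSpanSingleton k hv).repr.symm.toLinearIsometry,
    fun y => Submodule.mem_orthogonal_singleton_iff_inner_left.1 (SetLike.coe_mem _)⟩

/-- Let `v` be a unit vector in `ℝⁿ` (`n ≥ 2`), `T_♮ x = x - (x · v) v` the orthogonal
projection onto `T = {x : x · v = 0}`, `r > 0`, and `F(x) = x + (r/8) v - (4r)⁻¹ |T_♮ x|² v`.
If `A ⊆ ℝⁿ` is closed, `0 ∈ A`, `A ⊆ {x : |T_♮ x| ≤ 4r, |x · v| ≤ 4r}` and `x · v ≤ r/16` for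
every `x ∈ A`, then the set of directions `η ∈ S^{n-1}` for which there exists `z ∈ F(A)` with
`|T_♮ z| ≤ r`, `|z · v| ≤ r` and `(w - z) · η ≤ 0` for all `w ∈ F(A)` has `H^{n-1}` measure at
least `α_{n-1} (1 + 32²)^{-(n-1)/2}`, where `α_{n-1}` is the Lebesgue measure of the unit ball
in `ℝ^{n-1}`. -/
theorem stmt13 {n : ℕ} (hn : 2 ≤ n)
    (v : EuclideanSpace ℝ (Fin n)) (hv : ‖v‖ = 1) (r : ℝ) (hr : 0 < r)
    (F : EuclideanSpace ℝ (Fin n) → EuclideanSpace ℝ (Fin n))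
    (hF : ∀ x, F x = x + (r / 8) • v
      - ((4 * r)⁻¹ * ‖x - (inner ℝ x v : ℝ) • v‖ ^ 2) • v)
    (A : Set (EuclideanSpace ℝ (Fin n))) (hA : IsClosed A)
    (h0 : (0 : EuclideanSpace ℝ (Fin n)) ∈ A)
    (hbound : ∀ x ∈ A, ‖x - (inner ℝ x v : ℝ) • v‖ ≤ 4 * r ∧ |(inner ℝ x v : ℝ)| ≤ 4 * r)
    (hflat : ∀ x ∈ A, (inner ℝ x v : ℝ) ≤ r / 16) :
    volume (Metric.ball (0 : EuclideanSpace ℝ (Fin (n - 1))) 1) *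
        ENNReal.ofReal ((1 + 32 ^ 2 : ℝ) ^ (-(((n : ℝ) - 1) / 2)))
      ≤ μH[((n : ℝ) - 1)] {η : EuclideanSpace ℝ (Fin n) | ‖η‖ = 1 ∧
          ∃ z ∈ F '' A, ‖z - (inner ℝ z v : ℝ) • v‖ ≤ r ∧ |(inner ℝ z v : ℝ)| ≤ r ∧
            ∀ w ∈ F '' A, (inner ℝ (w - z) η : ℝ) ≤ 0} := by
  obtain rfl : F = paraboloidMap v r := funext hF
  have hAc : IsCompact A := isCompact_of_isClosed_isBounded hA <|
    isBounded_iff_forall_norm_le.2 ⟨8 * r, fun x hx =>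
      (norm_le_norm_sub_inner_smul_add_abs_inner hv x).trans (by linarith [hbound x hx])⟩
  obtain ⟨ι, hιv⟩ := exists_linearIsometry_inner_eq_zero (k := n - 1)
    (by rw [finrank_euclideanSpace_fin]; omega) (norm_ne_zero_iff.1 (hv.trans_ne one_ne_zero))
  have hdim : ((n - 1 : ℕ) : ℝ) = n - 1 := by
    rw [Nat.cast_sub (by omega), Nat.cast_one]
  rw [← hdim, ← volume_closedBall_rpow_neg_half (by norm_num)]
  refine volume_closedBall_le_hausdorffMeasure ι.isometry (lipschitzWith_one_sub_inner_smul hv) ?_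
  rintro _ ⟨y, hy, rfl⟩
  obtain ⟨hy1, hcone, hpos⟩ :=
    le_one_and_mul_le_sqrt_of_le_rpow (by norm_num : (0 : ℝ) < 32) (norm_nonneg (ι y))
      (by simpa using hy)
  obtain ⟨η, hη1, hηT, hηv⟩ := exists_norm_eq_one_sub_inner_smul_eq hv (hιv y) hy1
  refine ⟨η, ⟨hη1, exists_supporting_point_of_mem_cone hv hr hAc h0 hflat ?_ ?_⟩, hηT⟩
  · rwa [hηT, hηv]
  · rwa [hηv]
end
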